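/- If two pipes (s,e,t) and (s',e',t) of the same magazine state sequence L share the same tool t and share a common arc (i.e., there is an index i with s ≤ i < e and s' ≤ i < e'), then (s,e,t) = (s',e',t). -/
import Mathlib


/-- A pipe `π_{s,e}^t` of the magazine state sequence `L`. -/
def IsPipe (n : ℕ) (T L : ℕ → Finset ℕ) (s e t : ℕ) : Prop :=
  1 ≤ s ∧ s < e ∧ e ≤ n ∧ t ∈ T s ∧ t ∈ T e ∧
    ∀ i, s < i → i < e → t ∉ T i ∧ t ∈ L i

/-- two pipes of the same state sequence `L` with the same tool
`t` sharing a common arc (an index `i` with `s ≤ i < e` and `s' ≤ i < e'`)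
are equal. -/
theorem same_tool_pipes_with_common_arc_eq (n : ℕ) (T L : ℕ → Finset ℕ)
    (hTL : ∀ i ∈ Finset.Icc 1 n, T i ⊆ L i)
    (s e s' e' t : ℕ)
    (h : IsPipe n T L s e t) (h' : IsPipe n T L s' e' t)
    (i : ℕ) (h1 : s ≤ i) (h2 : i < e) (h3 : s' ≤ i) (h4 : i < e') :
    s = s' ∧ e = e' := by
  obtain ⟨hs1, hse, hen, hts, hte, hmid⟩ := h
  obtain ⟨hs1', hse', hen', hts', hte', hmid'⟩ := h'
  have hss : s = s' := by
    rcases lt_trichotomy s s' with hlt | heq | hgt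
    · exact absurd hts' ((hmid s' hlt (lt_of_le_of_lt h3 h2)).1)
    · exact heq
    · exact absurd hts ((hmid' s hgt (lt_of_le_of_lt h1 h4)).1)
  refine ⟨hss, ?_⟩
  rcases lt_trichotomy e e' with hlt | heq | hgt
  · exact absurd hte ((hmid' e (hss ▸ hse) hlt).1)
  · exact heq
  · exact absurd hte' ((hmid e' (hss ▸ hse') hgt).1)
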